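/- arXiv:2210.01072 — 3 statements merged into one kernel-verified Lean document; each statement's English description precedes it below -/
import Mathlib

section
/- (Theorem 2.2(b)) Let λ ≥ 0. Any minimizer θ ∈ ℝ^{N+1} of the ℓ2-regularized objective R(θ) + λ Σ_{i=1}^N θ_i² satisfies, for every i ∈ {1,…,N}, θ_i = (2/σ) (1 + 4λ/σ²)^{-1} f̂({i}). -/
/-!
Moving a minimizer θ along the direction v = (-p, eᵢ) changes the linear model by
t·(x̄ᵢ - p), so the regularized objective is a quadratic polynomial in t that is minimal at
t = 0; its linear coefficient must vanish. Since x̄ᵢ - p is centred and uncorrelated with every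
x̄ⱼ, j ≠ i, this first-order condition reads E[f·(x̄ᵢ - p)] = (p(1-p) + λ) θᵢ, and
E[f·(x̄ᵢ - p)] = (σ/2) f̂({i}) because φ_{i} = 2(x̄ᵢ - p)/σ.
-/

open Finset

namespace Paper

noncomputable section

/-- Map a Boolean coordinate to its ±1 value. -/
def sgn (b : Bool) : ℝ := if b then 1 else -1

/-- σ = 2√(p(1-p)). -/
def sigma (p : ℝ) : ℝ := 2 * Real.sqrt (p * (1 - p))

/-- Probability of a point x under the p-biased distribution B_p. -/
def wt (N : ℕ) (p : ℝ) (x : Fin N → Bool) : ℝ :=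
  ∏ i, (if x i then p else 1 - p)

/-- Expectation under the p-biased distribution B_p (finite weighted sum). -/
def expect (N : ℕ) (p : ℝ) (g : (Fin N → Bool) → ℝ) : ℝ :=
  ∑ x : Fin N → Bool, wt N p x * g x

/-- The basis function φ_S(x) = ∏_{i∈S} (x_i - μ)/σ with μ = 2p-1. -/
def phi (N : ℕ) (p : ℝ) (S : Finset (Fin N)) (x : Fin N → Bool) : ℝ :=
  ∏ i ∈ S, (sgn (x i) - (2 * p - 1)) / sigma p

/-- Fourier coefficient f̂(S) = E_{x~B_p}[f(x) φ_S(x)]. -/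
def coeff (N : ℕ) (p : ℝ) (f : (Fin N → Bool) → ℝ) (S : Finset (Fin N)) : ℝ :=
  expect N p (fun x => f x * phi N p S x)

/-- Individual influence Inf_i(f) = E_{x~B_p}[f(x|_{i→1}) - f(x|_{i→-1})]. -/
def infl (N : ℕ) (p : ℝ) (f : (Fin N → Bool) → ℝ) (i : Fin N) : ℝ :=
  expect N p (fun x => f (Function.update x i true) - f (Function.update x i false))

/-- x|_{I→-1}: set all coordinates in I to -1. -/
def setNeg (N : ℕ) (I : Finset (Fin N)) (x : Fin N → Bool) : Fin N → Bool :=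
  fun j => if j ∈ I then false else x j

/-- Group influence Inf_I(f) = E_{x~B_p}[f(x) - f(x|_{I→-1})]. -/
def inflSet (N : ℕ) (p : ℝ) (f : (Fin N → Bool) → ℝ) (I : Finset (Fin N)) : ℝ :=
  expect N p (fun x => f x - f (setNeg N I x))

/-- Least-squares objective R(θ) for the linear datamodel (x̄_i = (1+x_i)/2 ∈ {0,1}). -/
def Rres (N : ℕ) (p : ℝ) (f : (Fin N → Bool) → ℝ) (θ : Fin (N + 1) → ℝ) : ℝ :=
  expect N p
    (fun x => (f x - θ 0 - ∑ i : Fin N, θ i.succ * (if x i then (1 : ℝ) else 0)) ^ 2)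

/-- Joint probability of a single coordinate pair (x_i, x'_i) under the ρ-correlated
distribution. -/
def pairWt (p ρ : ℝ) (b b' : Bool) : ℝ :=
  if b then (if b' then p * (1 - (1 - ρ) * (1 - p)) else p * ((1 - ρ) * (1 - p)))
  else (if b' then (1 - p) * ((1 - ρ) * p) else (1 - p) * (1 - (1 - ρ) * p))

/-- Probability of the pair (x, x') under the ρ-correlated distribution B_{p,ρ}. -/
def wtPair (N : ℕ) (p ρ : ℝ) (x x' : Fin N → Bool) : ℝ :=
  ∏ i, pairWt p ρ (x i) (x' i)

/-- Noise stability h(ρ) = E_{(x,x')~B_{p,ρ}}[f(x) f(x')]. -/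
def noiseStab (N : ℕ) (p ρ : ℝ) (f : (Fin N → Bool) → ℝ) : ℝ :=
  ∑ x : Fin N → Bool, ∑ x' : Fin N → Bool, wtPair N p ρ x x' * (f x * f x')

lemma eq_zero_of_forall_nonneg_mul_add_mul_sq {a b : ℝ} (h : ∀ t : ℝ, 0 ≤ a * t + b * t ^ 2) :
    a = 0 := by
  by_contra ha
  have hd : 0 < |b| + 1 := by positivity
  have key := h (-a / (|b| + 1))
  have : a * (-a / (|b| + 1)) + b * (-a / (|b| + 1)) ^ 2
      = a ^ 2 * (b - |b| - 1) / (|b| + 1) ^ 2 := by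
    field_simp
    ring
  rw [this] at key
  have : a ^ 2 * (b - |b| - 1) < 0 :=
    mul_neg_of_pos_of_neg (by positivity) (by linarith [le_abs_self b])
  linarith [div_neg_of_neg_of_pos this (by positivity : (0 : ℝ) < (|b| + 1) ^ 2)]

lemma sum_sq_add_mul_single {ι : Type*} [Fintype ι] [DecidableEq ι] (a : ι → ℝ) (i : ι)
    (t : ℝ) :
    ∑ j, (a j + t * (Pi.single i 1 : ι → ℝ) j) ^ 2 = ∑ j, a j ^ 2 + (2 * t * a i + t ^ 2) := by
  simp only [Pi.single_apply, mul_ite, mul_one, mul_zero, add_sq, ite_pow, ne_eq,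
    OfNat.ofNat_ne_zero, not_false_eq_true, zero_pow, sum_add_distrib, sum_ite_eq', mem_univ,
    if_true]
  ring

lemma sigma_sq {p : ℝ} (hp : 0 ≤ p) (hp1 : p ≤ 1) : sigma p ^ 2 = 4 * (p * (1 - p)) := by
  rw [sigma, mul_pow, Real.sq_sqrt (mul_nonneg hp (by linarith))]
  norm_num

lemma sigma_pos {p : ℝ} (hp : 0 < p) (hp1 : p < 1) : 0 < sigma p :=
  mul_pos two_pos (Real.sqrt_pos.mpr (mul_pos hp (by linarith)))

/-- The `{0,1}`-valued coordinate `x̄ᵢ = (1 + xᵢ)/2` of the paper. -/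
def xbar (b : Bool) : ℝ := if b then 1 else 0

@[simp] lemma xbar_true : xbar true = 1 := rfl

@[simp] lemma xbar_false : xbar false = 0 := rfl

def linPred {N : ℕ} (θ : Fin (N + 1) → ℝ) (x : Fin N → Bool) : ℝ :=
  θ 0 + ∑ i, θ i.succ * xbar (x i)

lemma linPred_add_smul {N : ℕ} (θ v : Fin (N + 1) → ℝ) (t : ℝ) (x : Fin N → Bool) :
    linPred (θ + t • v) x = linPred θ x + t * linPred v x := by
  simp only [linPred, Pi.add_apply, Pi.smul_apply, smul_eq_mul, add_mul, sum_add_distrib,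
    mul_add, mul_sum, mul_assoc]
  ring

lemma linPred_cons_single {N : ℕ} (p : ℝ) (i : Fin N) (x : Fin N → Bool) :
    linPred (Fin.cons (-p) (Pi.single i 1) : Fin (N + 1) → ℝ) x = xbar (x i) - p := by
  simp only [linPred, Fin.cons_zero, Fin.cons_succ, Pi.single_apply, ite_mul, one_mul, zero_mul,
    sum_ite_eq', mem_univ, if_true]
  ring

section Expectation

variable {N : ℕ} {p : ℝ}

lemma expect_add (g h : (Fin N → Bool) → ℝ) :
    expect N p (fun x => g x + h x) = expect N p g + expect N p h := by
  simp only [expect, mul_add, sum_add_distrib]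

lemma expect_sub (g h : (Fin N → Bool) → ℝ) :
    expect N p (fun x => g x - h x) = expect N p g - expect N p h := by
  simp only [expect, mul_sub, sum_sub_distrib]

lemma expect_const_mul (a : ℝ) (g : (Fin N → Bool) → ℝ) :
    expect N p (fun x => a * g x) = a * expect N p g := by
  simp only [expect, mul_left_comm _ a, ← mul_sum]

lemma expect_sum {ι : Type*} (s : Finset ι) (g : ι → (Fin N → Bool) → ℝ) :
    expect N p (fun x => ∑ j ∈ s, g j x) = ∑ j ∈ s, expect N p (g j) := by
  simp only [expect, mul_sum]
  exact sum_comm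

lemma expect_prod (g : Fin N → Bool → ℝ) :
    expect N p (fun x => ∏ j, g j (x j)) = ∏ j, (p * g j true + (1 - p) * g j false) := by
  simp only [expect, wt, ← prod_mul_distrib]
  calc _ = ∏ j, ∑ b, (if b then p else 1 - p) * g j b :=
        (Fintype.prod_sum fun j b => (if b then p else 1 - p) * g j b).symm
    _ = _ := by simp

lemma expect_apply (i : Fin N) (g : Bool → ℝ) :
    expect N p (fun x => g (x i)) = p * g true + (1 - p) * g false := by
  have := expect_prod (p := p) fun j b => if j = i then g b else 1
  simp only [prod_ite_eq', mem_univ, if_true] at this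
  rw [this, prod_eq_single i (fun j _ hj => by simp [hj]) (by simp)]
  simp

lemma expect_mul_apply_of_ne {i j : Fin N} (hij : i ≠ j) (g h : Bool → ℝ) :
    expect N p (fun x => g (x i) * h (x j))
      = (p * g true + (1 - p) * g false) * (p * h true + (1 - p) * h false) := by
  have := expect_prod (p := p) fun k b => (if k = i then g b else 1) * (if k = j then h b else 1)
  simp only [prod_mul_distrib, prod_ite_eq', mem_univ, if_true] at this
  rw [this, ← prod_mul_prod_compl {i, j}, prod_pair hij, prod_eq_one (s := {i, j}ᶜ)]
  · simp [hij, hij.symm]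
  · intro k hk
    simp only [mem_compl, mem_insert, mem_singleton, not_or] at hk
    simp [hk.1, hk.2]

lemma expect_xbar_sub (i : Fin N) : expect N p (fun x => xbar (x i) - p) = 0 :=
  (expect_apply i fun b => xbar b - p).trans (by simp only [xbar_true, xbar_false]; ring)

lemma expect_xbar_mul_xbar_sub (i j : Fin N) :
    expect N p (fun x => xbar (x j) * (xbar (x i) - p))
      = if j = i then p * (1 - p) else 0 := by
  split_ifs with hji
  · subst hji
    rw [expect_apply j fun b => xbar b * (xbar b - p)]
    simp only [xbar_true, xbar_false]
    ring
  · rw [expect_mul_apply_of_ne hji xbar fun b => xbar b - p]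
    simp only [xbar_true, xbar_false]
    ring

lemma expect_linPred_mul_xbar_sub (θ : Fin (N + 1) → ℝ) (i : Fin N) :
    expect N p (fun x => linPred θ x * (xbar (x i) - p)) = θ i.succ * (p * (1 - p)) := by
  calc expect N p (fun x => linPred θ x * (xbar (x i) - p))
      = expect N p (fun x => θ 0 * (xbar (x i) - p)
          + ∑ j, θ j.succ * (xbar (x j) * (xbar (x i) - p))) := by
        simp only [linPred, add_mul, sum_mul, mul_assoc]
    _ = θ 0 * 0 + ∑ j, θ j.succ * (if j = i then p * (1 - p) else 0) := by
        rw [expect_add, expect_const_mul, expect_sum, expect_xbar_sub]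
        simp only [expect_const_mul, expect_xbar_mul_xbar_sub]
    _ = θ i.succ * (p * (1 - p)) := by simp

end Expectation

lemma Rres_eq_expect (N : ℕ) (p : ℝ) (f : (Fin N → Bool) → ℝ) (θ : Fin (N + 1) → ℝ) :
    Rres N p f θ = expect N p (fun x => (f x - linPred θ x) ^ 2) := by
  simp only [Rres, linPred, xbar, sub_sub]

lemma Rres_add_smul (N : ℕ) (p : ℝ) (f : (Fin N → Bool) → ℝ) (θ v : Fin (N + 1) → ℝ) (t : ℝ) :
    Rres N p f (θ + t • v) = Rres N p f θ
      - 2 * t * expect N p (fun x => (f x - linPred θ x) * linPred v x)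
      + t ^ 2 * expect N p (fun x => linPred v x ^ 2) := by
  calc Rres N p f (θ + t • v)
      = expect N p (fun x => ((f x - linPred θ x) ^ 2
          - 2 * t * ((f x - linPred θ x) * linPred v x)) + t ^ 2 * linPred v x ^ 2) := by
        rw [Rres_eq_expect]
        congr 1
        funext x
        rw [linPred_add_smul]
        ring
    _ = _ := by rw [expect_add, expect_sub, expect_const_mul, expect_const_mul, Rres_eq_expect]

lemma phi_singleton (N : ℕ) (p : ℝ) (i : Fin N) (x : Fin N → Bool) :
    phi N p {i} x = 2 / sigma p * (xbar (x i) - p) := by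
  rw [phi, prod_singleton]
  cases x i <;> simp [sgn] <;> ring

lemma coeff_singleton (N : ℕ) (p : ℝ) (f : (Fin N → Bool) → ℝ) (i : Fin N) :
    coeff N p f {i} = 2 / sigma p * expect N p (fun x => f x * (xbar (x i) - p)) := by
  rw [← expect_const_mul, coeff]
  congr 1
  funext x
  rw [phi_singleton]
  ring

/-- Theorem 2.2(b): any minimizer of the ℓ2-regularized objective satisfies
θ_i = (2/σ)(1 + 4λ/σ²)⁻¹ f̂({i}) for all i ∈ {1,…,N}. -/
theorem stmt_6 (N : ℕ) (p : ℝ) (hp : 0 < p) (hp1 : p < 1)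
    (f : (Fin N → Bool) → ℝ) (lam : ℝ) (hlam : 0 ≤ lam) (θ : Fin (N + 1) → ℝ)
    (hmin : ∀ θ' : Fin (N + 1) → ℝ,
      Rres N p f θ + lam * ∑ i : Fin N, (θ i.succ) ^ 2
        ≤ Rres N p f θ' + lam * ∑ i : Fin N, (θ' i.succ) ^ 2) :
    ∀ i : Fin N,
      θ i.succ = (2 / sigma p) * (1 + 4 * lam / (sigma p) ^ 2)⁻¹ * coeff N p f {i} := by
  intro i
  set v : Fin (N + 1) → ℝ := Fin.cons (-p) (Pi.single i 1)
  have hfirst : ∀ t : ℝ, 0 ≤ 2 * (lam * θ i.succ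
        - expect N p (fun x => (f x - linPred θ x) * (xbar (x i) - p))) * t
      + (expect N p (fun x => (xbar (x i) - p) ^ 2) + lam) * t ^ 2 := by
    intro t
    have h := hmin (θ + t • v)
    have hpen : ∑ j : Fin N, (θ + t • v) j.succ ^ 2
        = ∑ j : Fin N, θ j.succ ^ 2 + (2 * t * θ i.succ + t ^ 2) := by
      simpa [v] using sum_sq_add_mul_single (fun j => θ j.succ) i t
    simp only [Rres_add_smul, hpen, v, linPred_cons_single] at h
    linarith
  have hstat := eq_zero_of_forall_nonneg_mul_add_mul_sq hfirst
  simp only [sub_mul, expect_sub, expect_linPred_mul_xbar_sub] at hstat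
  have hnormal : (p * (1 - p) + lam) * θ i.succ
      = expect N p (fun x => f x * (xbar (x i) - p)) := by linarith
  have hσ := sigma_pos hp hp1
  have hden : 0 < p * (1 - p) + lam := by nlinarith
  rw [coeff_singleton, ← hnormal]
  field_simp
  rw [sigma_sq hp.le hp1.le]
  field_simp
  ring

end
end Paper
end

section
/- (Theorem 4.1, group influence) For every f : {-1,1}^N → ℝ and every I ⊆ {1,…,N}, the average group influence of deleting I decomposes as Inf_I(f) = E_{x~B_p}[f(x) - f(x|_{I→-1})] = p Σ_{i∈I} Inf_i(f) - Σ_{I'⊆I, |I'|≥2} (-1)^{|I'|} (p/(1-p))^{|I'|/2} f̂(I'). -/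
open Finset

namespace Paper

noncomputable section

/-!
Setting the coordinates in `I` to `-1` is a change of measure: under `B_p`,
`E[g(x|_{I→-1})] = E[∏_{i∈I} 1[x_i = -1]/(1-p) · g(x)]`, and each density factor equals
`1 - √(p/(1-p)) φ_{i}(x)`. Expanding the product over the subsets of `I` gives
`E[f(x|_{I→-1})] = Σ_{S⊆I} (-√(p/(1-p)))^{|S|} f̂(S)`. The term `S = ∅` is `E[f]`, and the same
change of measure for a single coordinate gives `p Inf_i(f) = √(p/(1-p)) f̂({i})`, which accounts
for the singletons.
-/

lemma sum_powerset_eq_add_sum_singleton_add {ι M : Type*} [DecidableEq ι]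
    [AddCommMonoid M] (s : Finset ι) (F : Finset ι → M) :
    ∑ t ∈ s.powerset, F t
      = F ∅ + ∑ i ∈ s, F {i} + ∑ t ∈ s.powerset.filter (fun t => 2 ≤ t.card), F t := by
  have hsmall : s.powerset.filter (fun t => ¬ 2 ≤ t.card) = insert ∅ (s.powersetCard 1) := by
    ext t
    simp only [Finset.mem_filter, Finset.mem_powerset, Finset.mem_insert, Finset.mem_powersetCard]
    constructor
    · rintro ⟨hts, hcard⟩
      rcases Nat.lt_or_ge t.card 1 with h | h
      · exact Or.inl (Finset.card_eq_zero.1 (by omega))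
      · exact Or.inr ⟨hts, by omega⟩
    · rintro (rfl | ⟨hts, hcard⟩)
      · simp
      · exact ⟨hts, by omega⟩
  rw [← Finset.sum_filter_add_sum_filter_not _ (fun t => 2 ≤ t.card), hsmall, add_comm,
    Finset.sum_insert (by simp), Finset.powersetCard_one, Finset.sum_map]
  rfl

section

variable {N : ℕ} {p : ℝ}

def bern (p : ℝ) (b : Bool) : ℝ := if b then p else 1 - p

lemma wt_eq_prod_bern (x : Fin N → Bool) : wt N p x = ∏ i, bern p (x i) := rfl

lemma sum_bern : ∑ c, bern p c = 1 := by simp [bern]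

lemma mul_expect (c : ℝ) (g : (Fin N → Bool) → ℝ) :
    c * expect N p g = expect N p (fun x => c * g x) := by
  simp only [expect, Finset.mul_sum, mul_left_comm]

lemma wt_funSplitAt_symm (a : Fin N) (c : Bool) (y : {j // j ≠ a} → Bool) :
    wt N p ((Equiv.funSplitAt a Bool).symm (c, y)) = bern p c * ∏ j, bern p (y j) := by
  rw [wt_eq_prod_bern, Fintype.prod_eq_mul_prod_subtype_ne _ a]
  congr 1
  · simp
  · refine Fintype.prod_congr _ _ fun j => ?_
    simp [j.2]

lemma funSplitAt_symm_apply_self (a : Fin N) (c : Bool) (y : {j // j ≠ a} → Bool) :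
    (Equiv.funSplitAt a Bool).symm (c, y) a = c := by
  simp

lemma update_funSplitAt_symm (a : Fin N) (b c : Bool) (y : {j // j ≠ a} → Bool) :
    Function.update ((Equiv.funSplitAt a Bool).symm (c, y)) a b
      = (Equiv.funSplitAt a Bool).symm (b, y) := by
  ext j; by_cases h : j = a <;> simp [h]

lemma expect_comp_update {b : Bool} (hb : bern p b ≠ 0) (a : Fin N)
    (g : (Fin N → Bool) → ℝ) :
    expect N p (fun x => g (Function.update x a b))
      = expect N p (fun x => (if x a = b then (bern p b)⁻¹ else 0) * g x) := by
  unfold expect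
  rw [← (Equiv.funSplitAt a Bool).symm.sum_comp, ← (Equiv.funSplitAt a Bool).symm.sum_comp]
  simp only [Fintype.sum_prod_type, wt_funSplitAt_symm, update_funSplitAt_symm,
    funSplitAt_symm_apply_self]
  rw [Finset.sum_comm, Finset.sum_comm (γ := Bool)]
  refine Fintype.sum_congr _ _ fun y => ?_
  rw [← Finset.sum_mul, ← Finset.sum_mul, sum_bern]
  simp only [ite_mul, zero_mul, mul_ite, mul_zero, Finset.sum_ite_eq', Finset.mem_univ, if_true]
  field_simp

lemma expect_comp_piecewise {I : Finset (Fin N)} {y : Fin N → Bool}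
    (hy : ∀ i ∈ I, bern p (y i) ≠ 0) (g : (Fin N → Bool) → ℝ) :
    expect N p (fun x => g (I.piecewise y x))
      = expect N p (fun x => (∏ i ∈ I, if x i = y i then (bern p (y i))⁻¹ else 0) * g x) := by
  induction I using Finset.induction_on generalizing g with
  | empty => simp
  | insert j s hj ih =>
    have hdens : ∀ x, (∏ i ∈ s, if Function.update x j (y j) i = y i then (bern p (y i))⁻¹ else 0)
        = ∏ i ∈ s, if x i = y i then (bern p (y i))⁻¹ else 0 := fun x =>
      Finset.prod_congr rfl fun i hi => by rw [Function.update_of_ne (ne_of_mem_of_not_mem hi hj)]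
    calc expect N p (fun x => g ((insert j s).piecewise y x))
        = expect N p (fun x => g (Function.update (s.piecewise y x) j (y j))) := by
          simp only [Finset.piecewise_insert]
      _ = expect N p (fun x => (∏ i ∈ s, if x i = y i then (bern p (y i))⁻¹ else 0)
            * g (Function.update x j (y j))) :=
          ih (fun i hi => hy i (Finset.mem_insert_of_mem hi)) fun z => g (Function.update z j (y j))
      _ = expect N p (fun x => (if x j = y j then (bern p (y j))⁻¹ else 0)
            * ((∏ i ∈ s, if x i = y i then (bern p (y i))⁻¹ else 0) * g x)) := by
          simpa only [hdens] using expect_comp_update (hy j (Finset.mem_insert_self j s)) j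
            fun z => (∏ i ∈ s, if z i = y i then (bern p (y i))⁻¹ else 0) * g z
      _ = _ := by simp only [Finset.prod_insert hj, mul_assoc]

lemma sgn_sub_div_sigma (hp : 0 < p) (hp1 : p < 1) (b : Bool) :
    (sgn b - (2 * p - 1)) / sigma p
      = if b then (Real.sqrt (p / (1 - p)))⁻¹ else -Real.sqrt (p / (1 - p)) := by
  have h1p : 0 < 1 - p := by linarith
  have hsigma : sigma p = 2 * (Real.sqrt p * Real.sqrt (1 - p)) := by
    rw [sigma, Real.sqrt_mul hp.le]
  rw [hsigma, Real.sqrt_div hp.le]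
  cases b
  · simp only [sgn, Bool.false_eq_true, if_false]
    field_simp
    linarith [Real.sq_sqrt hp.le]
  · simp only [sgn, if_true]
    field_simp
    linarith [Real.sq_sqrt h1p.le]

lemma infl_eq_coeff (hp : 0 < p) (hp1 : p < 1) (f : (Fin N → Bool) → ℝ) (i : Fin N) :
    p * infl N p f i = Real.sqrt (p / (1 - p)) * coeff N p f {i} := by
  have htrue : bern p true ≠ 0 := hp.ne'
  have hfalse : bern p false ≠ 0 := (sub_pos.2 hp1).ne'
  have hq : 0 < p / (1 - p) := div_pos hp (sub_pos.2 hp1)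
  rw [infl, expect_sub, expect_comp_update htrue, expect_comp_update hfalse, ← expect_sub,
    mul_expect, coeff, mul_expect]
  congr 1 with x
  simp only [phi, Finset.prod_singleton, sgn_sub_div_sigma hp hp1]
  cases x i
  · simp only [bern, Bool.false_eq_true, if_false, if_true]
    field_simp
    rw [Real.sq_sqrt hq.le]
    field_simp
    ring
  · simp only [bern, if_true, Bool.true_eq_false, if_false]
    field_simp [(Real.sqrt_pos.2 hq).ne']
    ring

lemma ite_eq_false_inv_bern_eq_one_add (hp : 0 < p) (hp1 : p < 1) (b : Bool) :
    (if b = false then (bern p false)⁻¹ else 0)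
      = 1 + -Real.sqrt (p / (1 - p)) * ((sgn b - (2 * p - 1)) / sigma p) := by
  have hq : 0 < p / (1 - p) := div_pos hp (sub_pos.2 hp1)
  rw [sgn_sub_div_sigma hp hp1]
  cases b
  · simp only [bern, Bool.false_eq_true, if_false, if_true]
    rw [neg_mul_neg, Real.mul_self_sqrt hq.le]
    field_simp [(sub_pos.2 hp1).ne']
    ring
  · simp [(Real.sqrt_pos.2 hq).ne']

lemma expect_comp_setNeg (hp : 0 < p) (hp1 : p < 1) (f : (Fin N → Bool) → ℝ)
    (I : Finset (Fin N)) :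
    expect N p (fun x => f (setNeg N I x))
      = ∑ S ∈ I.powerset, (-Real.sqrt (p / (1 - p))) ^ S.card * coeff N p f S := by
  have hfalse : bern p false ≠ 0 := (sub_pos.2 hp1).ne'
  change expect N p (fun x => f (I.piecewise (fun _ => false) x)) = _
  rw [expect_comp_piecewise (fun _ _ => hfalse)]
  simp only [ite_eq_false_inv_bern_eq_one_add hp hp1, Finset.prod_one_add, Finset.prod_mul_distrib,
    Finset.prod_const, expect, coeff, phi, Finset.sum_mul, Finset.mul_sum]
  rw [Finset.sum_comm]
  exact Finset.sum_congr rfl fun S _ => Finset.sum_congr rfl fun x _ => by ring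

end

/-- Theorem 4.1 (group influence): Inf_I(f) = p Σ_{i∈I} Inf_i(f)
- Σ_{I'⊆I, |I'|≥2} (-1)^{|I'|} (p/(1-p))^{|I'|/2} f̂(I'). -/
theorem stmt_14 (N : ℕ) (p : ℝ) (hp : 0 < p) (hp1 : p < 1)
    (f : (Fin N → Bool) → ℝ) (I : Finset (Fin N)) :
    inflSet N p f I
      = p * ∑ i ∈ I, infl N p f i
        - ∑ I' ∈ I.powerset.filter (fun I' => 2 ≤ I'.card),
            (-1 : ℝ) ^ I'.card * (p / (1 - p)) ^ ((I'.card : ℝ) / 2) * coeff N p f I' := by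
  have hq : 0 ≤ p / (1 - p) := div_nonneg hp.le (sub_pos.2 hp1).le
  have hpow : ∀ n : ℕ, (-Real.sqrt (p / (1 - p))) ^ n
      = (-1) ^ n * (p / (1 - p)) ^ ((n : ℝ) / 2) := fun n => by
    rw [neg_pow, Real.rpow_div_two_eq_sqrt _ hq, Real.rpow_natCast]
  have hempty : coeff N p f ∅ = expect N p f := by simp [coeff, phi]
  rw [inflSet, expect_sub, expect_comp_setNeg hp hp1, sum_powerset_eq_add_sum_singleton_add,
    Finset.mul_sum]
  simp only [Finset.card_empty, pow_zero, one_mul, hempty, Finset.card_singleton, pow_one,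
    neg_mul, ← infl_eq_coeff hp hp1, Finset.sum_neg_distrib]
  simp only [hpow]
  ring

end
end Paper
end

section
/- (Lemma A.2) For every f : {-1,1}^N → ℝ and every I ⊆ {1,…,N}, the residual term in the group influence decomposition is bounded by |Σ_{I'⊆I, |I'|≥2} (-1)^{|I'|} (p/(1-p))^{|I'|/2} f̂(I')| ≤ (1-p)^{-|I|/2} √(B_{≥2}), where B_{≥2} = Σ_{S⊆{1,…,N}, |S|≥2} f̂(S)². -/
/-! By Cauchy–Schwarz the sum is at most the ℓ² norm of the weights `±(p/(1-p))^{|I'|/2}` times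
that of the coefficients `f̂(I')`. The squared weights are `(p/(1-p))^{|I'|}`, and summed over all
`I' ⊆ I` they give `(1 + p/(1-p))^{|I|} = (1-p)^{-|I|}` by the binomial theorem; the coefficients
range over some of the sets of size at least two. -/

open Finset

namespace Paper

noncomputable section

theorem abs_sum_mul_le_sqrt_mul_sqrt {ι : Type*} (s : Finset ι) (f g : ι → ℝ) :
    |∑ i ∈ s, f i * g i| ≤ √(∑ i ∈ s, f i ^ 2) * √(∑ i ∈ s, g i ^ 2) := by
  rw [← Real.sqrt_sq_eq_abs, ← Real.sqrt_mul (sum_nonneg fun _ _ ↦ sq_nonneg _)]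
  exact Real.sqrt_le_sqrt (sum_mul_sq_le_sq_mul_sq s f g)

theorem rpow_div_two_sq {x : ℝ} (hx : 0 ≤ x) (y : ℝ) : (x ^ (y / 2)) ^ 2 = x ^ y := by
  rw [← Real.rpow_natCast, ← Real.rpow_mul hx]
  norm_num

theorem sq_neg_one_pow_mul_rpow_div_two {r : ℝ} (hr : 0 ≤ r) (k : ℕ) :
    ((-1 : ℝ) ^ k * r ^ ((k : ℝ) / 2)) ^ 2 = r ^ k := by
  rw [mul_pow, ← pow_mul, pow_mul', neg_one_sq, one_pow, one_mul, rpow_div_two_sq hr,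
    Real.rpow_natCast]

theorem sum_pow_card_le_add_one_pow {ι : Type*} {r : ℝ} (hr : 0 ≤ r) {I : Finset ι}
    {s : Finset (Finset ι)} (hs : s ⊆ I.powerset) : ∑ J ∈ s, r ^ #J ≤ (r + 1) ^ #I := by
  rw [← sum_pow_mul_eq_add_pow]
  simp only [one_pow, mul_one]
  exact sum_le_sum_of_subset_of_nonneg hs fun _ _ _ ↦ pow_nonneg hr _

/-- Lemma A.2: the residual term in the group influence decomposition is bounded by
(1-p)^{-|I|/2} √(B_{≥2}). -/
theorem stmt_16 (N : ℕ) (p : ℝ) (hp : 0 < p) (hp1 : p < 1)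
    (f : (Fin N → Bool) → ℝ) (I : Finset (Fin N)) :
    |∑ I' ∈ I.powerset.filter (fun I' => 2 ≤ I'.card),
        (-1 : ℝ) ^ I'.card * (p / (1 - p)) ^ ((I'.card : ℝ) / 2) * coeff N p f I'|
      ≤ (1 - p) ^ (-(I.card : ℝ) / 2) *
          Real.sqrt (∑ S ∈ Finset.univ.filter (fun S : Finset (Fin N) => 2 ≤ S.card),
            (coeff N p f S) ^ 2) := by
  have h1p : 0 < 1 - p := by linarith
  have hr : 0 ≤ p / (1 - p) := div_nonneg hp.le h1p.le
  have hweights : ∑ I' ∈ I.powerset.filter (fun I' => 2 ≤ I'.card),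
      ((-1 : ℝ) ^ I'.card * (p / (1 - p)) ^ ((I'.card : ℝ) / 2)) ^ 2
        ≤ ((1 - p) ^ (-(I.card : ℝ) / 2)) ^ 2 := by
    simp only [sq_neg_one_pow_mul_rpow_div_two hr]
    calc _ ≤ (p / (1 - p) + 1) ^ #I := sum_pow_card_le_add_one_pow hr (filter_subset _ _)
      _ = _ := by
        rw [rpow_div_two_sq h1p.le, Real.rpow_neg h1p.le, Real.rpow_natCast, ← inv_pow]
        field_simp
        ring
  have hcoeffs : ∑ I' ∈ I.powerset.filter (fun I' => 2 ≤ I'.card), coeff N p f I' ^ 2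
      ≤ ∑ S ∈ Finset.univ.filter (fun S : Finset (Fin N) => 2 ≤ S.card), coeff N p f S ^ 2 :=
    sum_le_sum_of_subset_of_nonneg (fun _ ↦ by simp +contextual) fun _ _ _ ↦ sq_nonneg _
  calc _ ≤ _ := abs_sum_mul_le_sqrt_mul_sqrt _ _ _
    _ ≤ _ := by
      gcongr
      exact (Real.sqrt_le_sqrt hweights).trans_eq (Real.sqrt_sq (Real.rpow_nonneg h1p.le _))

end
end Paper
end
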